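/- arXiv:2103.04752 — 5 statements merged into one kernel-verified Lean document; each statement's English description precedes it below -/
import Mathlib

section
/- Let ρ : G → G be a group homomorphism and define Ξ_ρ := {β ∈ ℂ | ρ([a,0])·β = β for all a ∈ U(1)}. Then a map τ : ℂ → ℂ satisfies the equivariance condition τ(g·z) = ρ(g)·τ(z) for all g ∈ G and z ∈ ℂ if and only if there exists β ∈ Ξ_ρ such that τ(z) = ρ([1,z])·β for all z ∈ ℂ. -/
open Complex MeasureTheory ComplexConjugate

noncomputable section

/-- The group `G = U(1) ⋉ ℂ`, as pairs `[a, b]` with `a ∈ U(1)`, `b ∈ ℂ`. -/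
abbrev G1 : Type := Circle × ℂ

/-- Multiplication `[a,b][a',b'] = [aa', ab' + b]` in `G`. -/
def Gmul (g h : G1) : G1 := (g.1 * h.1, (g.1 : ℂ) * h.2 + g.2)

/-- Inverse `[a,b]⁻¹ = [a⁻¹, -a⁻¹ b]` in `G`. -/
def Ginv (g : G1) : G1 := (g.1⁻¹, -((g.1⁻¹ : Circle) : ℂ) * g.2)

/-- The action `[a,b]·z = a z + b` of `G` on `ℂ`. -/
def Gact (g : G1) (z : ℂ) : ℂ := (g.1 : ℂ) * z + g.2

/-- `ρ : G → G` is a group homomorphism. -/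
def IsGHom (ρ : G1 → G1) : Prop := ∀ g h, ρ (Gmul g h) = Gmul (ρ g) (ρ h)

/-- `(ρ, τ)` is an equivariant pair: `ρ` is a `G`-endomorphism and
`τ(g·z) = ρ(g)·τ(z)` for all `g ∈ G`, `z ∈ ℂ`. -/
def Equivariant (ρ : G1 → G1) (τ : ℂ → ℂ) : Prop :=
  IsGHom ρ ∧ ∀ g z, τ (Gact g z) = Gact (ρ g) (τ z)

/-- The automorphy factor `j^α(g,z) = exp(-iα Im(z conj(g⁻¹·0)))`. -/
def jfac (α : ℝ) (g : G1) (z : ℂ) : ℂ :=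
  Complex.exp (-Complex.I * α * ((z * conj (Gact (Ginv g) 0)).im : ℝ))

/-- Wirtinger derivative `∂f/∂z`. -/
def wdz (f : ℂ → ℂ) (z : ℂ) : ℂ :=
  (1/2 : ℂ) * (fderiv ℝ f z 1 - Complex.I * fderiv ℝ f z Complex.I)

/-- Wirtinger derivative `∂f/∂z̄`. -/
def wdzbar (f : ℂ → ℂ) (z : ℂ) : ℂ :=
  (1/2 : ℂ) * (fderiv ℝ f z 1 + Complex.I * fderiv ℝ f z Complex.I)

/-- `S(z) = νz + μ(τ(z) ∂τ̄/∂z̄(z) − τ̄(z) ∂τ/∂z̄(z))`. -/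
def Sfun (ν μ : ℝ) (τ : ℂ → ℂ) (z : ℂ) : ℂ :=
  (ν : ℂ) * z + (μ : ℂ) * (τ z * wdzbar (fun w => conj (τ w)) z - conj (τ z) * wdzbar τ z)

/-- Euclidean Laplacian `Δh = 4 ∂²h/∂z∂z̄`. -/
def lap (f : ℂ → ℂ) (z : ℂ) : ℂ := 4 * wdz (wdzbar f) z

/-- The mixed magnetic Schrödinger operator `Δ^{ν,μ}_τ`. -/
def DeltaTau (ν μ : ℝ) (τ f : ℂ → ℂ) (z : ℂ) : ℂ :=
  lap f z
    + 2 * (Sfun ν μ τ z * wdz f z - conj (Sfun ν μ τ z) * wdzbar f z)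
    - (‖Sfun ν μ τ z‖ : ℂ)^2 * f z
    + (μ : ℂ) * (τ z * lap (fun w => conj (τ w)) z - conj (τ z) * lap τ z) * f z

/-- The Landau Hamiltonian `Δ_B`. -/
def DeltaB (B : ℝ) (f : ℂ → ℂ) (z : ℂ) : ℂ :=
  lap f z + 2 * (B : ℂ) * (z * wdz f z - conj z * wdzbar f z)
    - (B : ℂ)^2 * (‖z‖ : ℂ)^2 * f z

/-- The magnetic field `B(z) = ν + μ(|∂τ/∂z|² − |∂τ/∂z̄|²)`. -/
def Bfield (ν μ : ℝ) (τ : ℂ → ℂ) (z : ℂ) : ℝ :=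
  ν + μ * ((‖wdz τ z‖)^2 - (‖wdzbar τ z‖)^2)

/-- `φ : ℂ → ℝ` is a smooth gauge: `θ^{ν,μ}_τ = θ_B + i dφ`, i.e.
`i·Dφ(z)(v) = −(1/2)(conj(S(z))v − S(z)conj(v)) + (B/2)(z̄v − z v̄)`. -/
def IsGauge (ν μ B : ℝ) (τ : ℂ → ℂ) (φ : ℂ → ℝ) : Prop :=
  ContDiff ℝ (⊤ : ℕ∞) φ ∧ ∀ z v : ℂ,
    Complex.I * ((fderiv ℝ φ z v : ℝ) : ℂ) =
      -(1/2 : ℂ) * (conj (Sfun ν μ τ z) * v - Sfun ν μ τ z * conj v)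
      + ((B : ℂ)/2) * (conj z * v - z * conj v)

/-- `Ξ_ρ = {β ∈ ℂ | ρ([a,0])·β = β for all a ∈ U(1)}`. -/
def Xi (ρ : G1 → G1) : Set ℂ := {β : ℂ | ∀ a : Circle, Gact (ρ (a, 0)) β = β}

theorem Gact_Gmul (g h : G1) (z : ℂ) : Gact (Gmul g h) z = Gact g (Gact h z) := by
  simp only [Gact, Gmul, Circle.coe_mul]
  ring

theorem IsGHom.Gact_map_Gmul {ρ : G1 → G1} (hρ : IsGHom ρ) (g h : G1) (z : ℂ) :
    Gact (ρ (Gmul g h)) z = Gact (ρ g) (Gact (ρ h) z) := by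
  rw [hρ, Gact_Gmul]

theorem Gmul_translation (g : G1) (z : ℂ) : Gmul g (1, z) = Gmul (1, Gact g z) (g.1, 0) := by
  simp [Gmul, Gact]

section Equivariant

variable {ρ : G1 → G1} {τ : ℂ → ℂ}

theorem apply_zero_mem_Xi (hτ : ∀ g z, τ (Gact g z) = Gact (ρ g) (τ z)) : τ 0 ∈ Xi ρ := by
  intro a
  simpa [Gact] using (hτ (a, 0) 0).symm

theorem eq_Gact_translation_apply_zero (hτ : ∀ g z, τ (Gact g z) = Gact (ρ g) (τ z)) (z : ℂ) :
    τ z = Gact (ρ (1, z)) (τ 0) := by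
  simpa [Gact] using hτ (1, z) 0

theorem equivariant_of_eq_Gact_translation (hρ : IsGHom ρ) {β : ℂ} (hβ : β ∈ Xi ρ)
    (hτ : ∀ z, τ z = Gact (ρ (1, z)) β) (g : G1) (z : ℂ) :
    τ (Gact g z) = Gact (ρ g) (τ z) := by
  calc τ (Gact g z) = Gact (ρ (1, Gact g z)) (Gact (ρ (g.1, 0)) β) := by rw [hτ, hβ]
    _ = Gact (ρ (Gmul g (1, z))) β := by rw [Gmul_translation, hρ.Gact_map_Gmul]
    _ = Gact (ρ g) (τ z) := by rw [hρ.Gact_map_Gmul, hτ]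

end Equivariant

/-- a map `τ` is compatible with the `G`-endomorphism `ρ` iff
`τ(z) = ρ([1,z])·β` for some `β ∈ Ξ_ρ`. -/
theorem equivariant_iff_tau_beta (ρ : G1 → G1) (hρ : IsGHom ρ) (τ : ℂ → ℂ) :
    (∀ (g : G1) (z : ℂ), τ (Gact g z) = Gact (ρ g) (τ z)) ↔
      ∃ β ∈ Xi ρ, ∀ z : ℂ, τ z = Gact (ρ ((1 : Circle), z)) β :=
  ⟨fun hτ => ⟨τ 0, apply_zero_mem_Xi hτ, eq_Gact_translation_apply_zero hτ⟩,
    fun ⟨_, hβ, hτ⟩ => equivariant_of_eq_Gact_translation hρ hβ hτ⟩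
end
end

section
/- Let ρ̃ : U(1) → U(1) and τ̃ : ℂ → ℂ be maps, suppose that ρ : G → G defined by ρ([a,b]) := [ρ̃(a), τ̃(b)] is a group homomorphism, and let τ : ℂ → ℂ satisfy the equivariance condition τ(g·z) = ρ(g)·τ(z) for all g ∈ G, z ∈ ℂ. Then: (1) τ̃(ab + c) = ρ̃(a)·τ̃(b) + τ̃(c) for all a ∈ U(1) and b, c ∈ ℂ (in particular τ̃ is additive); (2) there exists β ∈ ℂ such that τ(z) = τ̃(z) + β for all z ∈ ℂ; and (3) if β ≠ 0 then ρ̃(a) = 1 for every a ∈ U(1), so that τ̃(ab + c) = τ̃(b) + τ̃(c) for all a ∈ U(1), b, c ∈ ℂ. -/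
open Complex MeasureTheory ComplexConjugate

noncomputable section

section SeparatedVariables

variable {ρt : Circle → Circle} {τt : ℂ → ℂ}

theorem IsGHom.snd_map_mul_add (hρ : IsGHom fun g : G1 => (ρt g.1, τt g.2))
    (a : Circle) (b c : ℂ) : τt ((a : ℂ) * b + c) = (ρt a : ℂ) * τt b + τt c := by
  simpa [Gmul] using congrArg Prod.snd (hρ (a, c) (1, b))

theorem IsGHom.fst_map_one (hρ : IsGHom fun g : G1 => (ρt g.1, τt g.2)) : ρt 1 = 1 := by
  simpa [Gmul] using congrArg Prod.fst (hρ (1, 0) (1, 0))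

theorem IsGHom.snd_map_zero (hρ : IsGHom fun g : G1 => (ρt g.1, τt g.2)) : τt 0 = 0 := by
  simpa [hρ.fst_map_one] using hρ.snd_map_mul_add 1 0 0

variable {τ : ℂ → ℂ}

theorem eq_add_apply_zero_of_equivariant (hρ : IsGHom fun g : G1 => (ρt g.1, τt g.2))
    (hτ : ∀ (g : G1) (z : ℂ), τ (Gact g z) = Gact (ρt g.1, τt g.2) (τ z)) (z : ℂ) :
    τ z = τt z + τ 0 := by
  simpa [Gact, hρ.fst_map_one, add_comm] using hτ (1, z) 0

theorem eq_one_of_equivariant_of_apply_zero_ne_zero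
    (hρ : IsGHom fun g : G1 => (ρt g.1, τt g.2))
    (hτ : ∀ (g : G1) (z : ℂ), τ (Gact g z) = Gact (ρt g.1, τt g.2) (τ z))
    (hτ0 : τ 0 ≠ 0) (a : Circle) : ρt a = 1 := by
  have hfix : (ρt a : ℂ) * τ 0 = 1 * τ 0 := by
    simpa [Gact, hρ.snd_map_zero] using (hτ (a, 0) 0).symm
  exact Circle.ext (mul_right_cancel₀ hτ0 hfix)

end SeparatedVariables

/-- structure of equivariant pairs `(ρ̃ ⋉ τ̃, τ)` with separated variables. -/
theorem equivariant_separated_variables (ρt : Circle → Circle) (τt : ℂ → ℂ)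
    (hρ : IsGHom (fun g : G1 => (ρt g.1, τt g.2)))
    (τ : ℂ → ℂ)
    (hτ : ∀ (g : G1) (z : ℂ), τ (Gact g z) = Gact (ρt g.1, τt g.2) (τ z)) :
    (∀ (a : Circle) (b c : ℂ), τt ((a : ℂ) * b + c) = (ρt a : ℂ) * τt b + τt c) ∧
    ∃ β : ℂ, (∀ z : ℂ, τ z = τt z + β) ∧
      (β ≠ 0 → (∀ a : Circle, ρt a = 1) ∧
        ∀ (a : Circle) (b c : ℂ), τt ((a : ℂ) * b + c) = τt b + τt c) := by
  refine ⟨hρ.snd_map_mul_add, τ 0, eq_add_apply_zero_of_equivariant hρ hτ, fun hβ => ?_⟩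
  have hrot := eq_one_of_equivariant_of_apply_zero_ne_zero hρ hτ hβ
  refine ⟨hrot, fun a b c => ?_⟩
  rw [hρ.snd_map_mul_add, hrot, Circle.coe_one, one_mul]
end
end

section
/- Let (ρ,τ) be an equivariant pair with τ of class C^∞ and let ν, μ ∈ ℝ. Define J(g,z) := j^ν(g,z)·j^μ(ρ(g),τ(z)) and the operator (T_g f)(z) := conj(J(g,z))·f(g·z). Then for every g ∈ G and every C^∞ function f : ℂ → ℂ, Δ^{ν,μ}_τ (T_g f) = T_g (Δ^{ν,μ}_τ f). -/
/-!
Equivariance forces `ρ` to send translations to translations: `c ↦ (ρ [1, c]).1` is a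
character of `(ℂ, +)`, conjugating by the rotation `-1` shows that it is even, and an even
character is trivial because `χ c = χ (c/2) χ (c/2) = χ (-c/2) χ (c/2) = 1`. Hence
`τ (z + c) = τ z + d c`, so the real derivative of `τ` is constant: `τ` and `τ̄` are harmonic
and `∂S/∂z` is constant.

With the magnetic derivatives `D f = 2 ∂f/∂z - S̄ f` and `D̄ f = 2 ∂f/∂z̄ + S f` this gives
`Δ^{ν,μ}_τ = D D̄ - 2 ∂S/∂z`. Write `g = [a, b]` and `ρ g = [A, c]`. Then
`conj (J (g, z)) = exp (ℓ z)` with `ℓ = E - Ē`, `E z = ν/2 conj(g⁻¹·0) z + μ/2 conj(ρ(g)⁻¹·0) τ z`,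
and `τ (a z + b) = A τ z + c` yields the gauge identity `2 ∂ℓ/∂z̄ + S = ā S(g·)` together with
its conjugate. These say exactly that `D̄ (T_g f) = ā T_g (D̄ f)` and `D (T_g f) = a T_g (D f)`,
and `ā a = 1` finishes the proof.
-/

open Complex MeasureTheory ComplexConjugate

noncomputable section

section Wirtinger

variable {f g : ℂ → ℂ} {z : ℂ}

lemma fderiv_apply_eq_wdz_mul_add (f : ℂ → ℂ) (z v : ℂ) :
    fderiv ℝ f z v = wdz f z * v + wdzbar f z * conj v := by
  have hv : v = v.re • (1 : ℂ) + v.im • I := by simp [Complex.re_add_im]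
  conv_lhs => rw [hv, map_add, map_smul, map_smul]
  rw [wdz, wdzbar, Complex.real_smul, Complex.real_smul]
  conv_rhs => rw [← Complex.re_add_im v]
  simp only [map_add, map_mul, Complex.conj_ofReal, Complex.conj_I]
  linear_combination ((v.im : ℂ) * fderiv ℝ f z I) * Complex.I_sq

lemma wdz_add (hf : DifferentiableAt ℝ f z) (hg : DifferentiableAt ℝ g z) :
    wdz (fun w => f w + g w) z = wdz f z + wdz g z := by
  simp only [wdz, fderiv_fun_add hf hg, add_apply]
  ring

lemma wdzbar_add (hf : DifferentiableAt ℝ f z) (hg : DifferentiableAt ℝ g z) :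
    wdzbar (fun w => f w + g w) z = wdzbar f z + wdzbar g z := by
  simp only [wdzbar, fderiv_fun_add hf hg, add_apply]
  ring

lemma wdzbar_add_const (c : ℂ) : wdzbar (fun w => f w + c) z = wdzbar f z := by
  simp only [wdzbar, fderiv_add_const]

lemma wdz_const (c : ℂ) : wdz (fun _ => c) z = 0 := by
  simp [wdz]

lemma wdz_const_mul (hf : DifferentiableAt ℝ f z) (c : ℂ) :
    wdz (fun w => c * f w) z = c * wdz f z := by
  simp only [wdz, fderiv_const_mul hf, smul_apply, smul_eq_mul]
  ring

lemma wdzbar_const_mul (hf : DifferentiableAt ℝ f z) (c : ℂ) :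
    wdzbar (fun w => c * f w) z = c * wdzbar f z := by
  simp only [wdzbar, fderiv_const_mul hf, smul_apply, smul_eq_mul]
  ring

lemma wdz_id : wdz (fun w => w) z = 1 := by
  simp only [wdz, fderiv_fun_id, ContinuousLinearMap.id_apply]
  linear_combination (-1 / 2 : ℂ) * Complex.I_sq

lemma wdzbar_id : wdzbar (fun w => w) z = 0 := by
  simp only [wdzbar, fderiv_fun_id, ContinuousLinearMap.id_apply]
  linear_combination (1 / 2 : ℂ) * Complex.I_sq

lemma wdz_mul (hf : DifferentiableAt ℝ f z) (hg : DifferentiableAt ℝ g z) :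
    wdz (fun w => f w * g w) z = wdz f z * g z + f z * wdz g z := by
  simp only [wdz, fderiv_fun_mul hf hg, add_apply, smul_apply, smul_eq_mul]
  ring

lemma wdzbar_mul (hf : DifferentiableAt ℝ f z) (hg : DifferentiableAt ℝ g z) :
    wdzbar (fun w => f w * g w) z = wdzbar f z * g z + f z * wdzbar g z := by
  simp only [wdzbar, fderiv_fun_mul hf hg, add_apply, smul_apply, smul_eq_mul]
  ring

lemma wdz_cexp (hf : DifferentiableAt ℝ f z) :
    wdz (fun w => exp (f w)) z = exp (f z) * wdz f z := by
  simp only [wdz, hf.hasFDerivAt.cexp.fderiv, smul_apply, smul_eq_mul]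
  ring

lemma wdzbar_cexp (hf : DifferentiableAt ℝ f z) :
    wdzbar (fun w => exp (f w)) z = exp (f z) * wdzbar f z := by
  simp only [wdzbar, hf.hasFDerivAt.cexp.fderiv, smul_apply, smul_eq_mul]
  ring

lemma fderiv_conj_apply (f : ℂ → ℂ) (z v : ℂ) :
    fderiv ℝ (fun w => conj (f w)) z v = conj (fderiv ℝ f z v) :=
  congrArg (· v) (conjCLE.comp_fderiv (f := f) (x := z))

lemma DifferentiableAt.conj (hf : DifferentiableAt ℝ f z) :
    DifferentiableAt ℝ (fun w => conj (f w)) z :=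
  conjCLE.differentiableAt.comp z hf

@[fun_prop]
lemma ContDiff.conj {n : WithTop ℕ∞} (hf : ContDiff ℝ n f) :
    ContDiff ℝ n (fun w => conj (f w)) :=
  conjCLE.contDiff.comp hf

lemma wdzbar_conj : wdzbar (fun w => conj (f w)) z = conj (wdz f z) := by
  simp only [wdzbar, wdz, fderiv_conj_apply, map_mul, map_sub, map_div₀, map_one, map_ofNat,
    conj_I]
  ring

lemma wdz_sub_conj (hf : DifferentiableAt ℝ f z) :
    wdz (fun w => f w - conj (f w)) z = wdz f z - conj (wdzbar f z) := by
  simp only [wdz, wdzbar, fderiv_fun_sub hf hf.conj, sub_apply, fderiv_conj_apply, map_mul,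
    map_add, map_div₀, map_one, map_ofNat, conj_I]
  ring

lemma wdzbar_sub_conj (hf : DifferentiableAt ℝ f z) :
    wdzbar (fun w => f w - conj (f w)) z = wdzbar f z - conj (wdz f z) := by
  simp only [wdz, wdzbar, fderiv_fun_sub hf hf.conj, sub_apply, fderiv_conj_apply, map_mul,
    map_sub, map_div₀, map_one, map_ofNat, conj_I]
  ring

lemma hasFDerivAt_comp_mul_add {a b : ℂ} (hf : DifferentiableAt ℝ f (a * z + b)) :
    HasFDerivAt (fun w => f (a * w + b))
      ((fderiv ℝ f (a * z + b)).comp (a • ContinuousLinearMap.id ℝ ℂ)) z :=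
  hf.hasFDerivAt.comp z (((hasFDerivAt_id z).const_mul a).add_const b)

lemma wdz_comp_mul_add {a b : ℂ} (hf : DifferentiableAt ℝ f (a * z + b)) :
    wdz (fun w => f (a * w + b)) z = a * wdz f (a * z + b) := by
  rw [wdz, (hasFDerivAt_comp_mul_add hf).fderiv]
  simp only [ContinuousLinearMap.comp_apply, smul_apply, ContinuousLinearMap.id_apply,
    smul_eq_mul, fderiv_apply_eq_wdz_mul_add f, map_mul, map_one, conj_I]
  linear_combination ((conj a * wdzbar f (a * z + b) - a * wdz f (a * z + b)) / 2) * I_sq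

lemma wdzbar_comp_mul_add {a b : ℂ} (hf : DifferentiableAt ℝ f (a * z + b)) :
    wdzbar (fun w => f (a * w + b)) z = conj a * wdzbar f (a * z + b) := by
  rw [wdzbar, (hasFDerivAt_comp_mul_add hf).fderiv]
  simp only [ContinuousLinearMap.comp_apply, smul_apply, ContinuousLinearMap.id_apply,
    smul_eq_mul, fderiv_apply_eq_wdz_mul_add f, map_mul, map_one, conj_I]
  linear_combination ((a * wdz f (a * z + b) - conj a * wdzbar f (a * z + b)) / 2) * I_sq

lemma conj_mul_wdzbar_of_comp_mul_add {a b A c : ℂ} (hf : Differentiable ℝ f)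
    (h : ∀ x, f (a * x + b) = A * f x + c) :
    conj a * wdzbar f (a * z + b) = A * wdzbar f z := by
  rw [← wdzbar_comp_mul_add (hf _), funext h, wdzbar_add_const, wdzbar_const_mul (hf z)]

lemma contDiff_wdzbar {n : WithTop ℕ∞} (hf : ContDiff ℝ (n + 1) f) :
    ContDiff ℝ n (wdzbar f) := by
  have hD := hf.fderiv_right le_rfl
  unfold wdzbar
  fun_prop

end Wirtinger

lemma contDiff_Sfun {n : WithTop ℕ∞} {τ : ℂ → ℂ} (ν μ : ℝ) (hτ : ContDiff ℝ (n + 1) τ) :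
    ContDiff ℝ n (Sfun ν μ τ) := by
  have h₁ := contDiff_wdzbar hτ
  have h₂ := contDiff_wdzbar hτ.conj
  have hτ' : ContDiff ℝ n τ := hτ.of_le le_self_add
  unfold Sfun
  fun_prop

def HasConstIncrements {E F : Type*} [Add E] [Add F] (f : E → F) : Prop :=
  ∀ c, ∃ d, ∀ x, f (x + c) = f x + d

lemma HasConstIncrements.fderiv_eq {𝕜 E F : Type*} [NontriviallyNormedField 𝕜]
    [NormedAddCommGroup E] [NormedSpace 𝕜 E] [NormedAddCommGroup F] [NormedSpace 𝕜 F]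
    {f : E → F} (hf : HasConstIncrements f) (x : E) : fderiv 𝕜 f x = fderiv 𝕜 f 0 := by
  obtain ⟨d, hd⟩ := hf x
  calc fderiv 𝕜 f x = fderiv 𝕜 (fun y => f (y + x)) 0 := by
        rw [fderiv_comp_add_right, zero_add]
    _ = fderiv 𝕜 (fun y => f y + d) 0 := by simp only [hd]
    _ = fderiv 𝕜 f 0 := fderiv_add_const d

section ConstIncrements

variable {f : ℂ → ℂ}

lemma HasConstIncrements.wdz_eq (hf : HasConstIncrements f) (x : ℂ) :
    wdz f x = wdz f 0 := by
  rw [wdz, wdz, hf.fderiv_eq x]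

lemma HasConstIncrements.wdzbar_eq (hf : HasConstIncrements f) (x : ℂ) :
    wdzbar f x = wdzbar f 0 := by
  rw [wdzbar, wdzbar, hf.fderiv_eq x]

lemma HasConstIncrements.lap_eq_zero (hf : HasConstIncrements f) (x : ℂ) : lap f x = 0 := by
  rw [lap, show wdzbar f = fun _ => wdzbar f 0 from funext hf.wdzbar_eq, wdz_const, mul_zero]

lemma HasConstIncrements.conj (hf : HasConstIncrements f) :
    HasConstIncrements (fun x => conj (f x)) :=
  fun c => (hf c).elim fun d hd => ⟨conj d, fun x => by simp only [hd, map_add]⟩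

lemma HasConstIncrements.sfun (hf : HasConstIncrements f) (ν μ : ℝ) :
    HasConstIncrements (Sfun ν μ f) := by
  intro c
  obtain ⟨d, hd⟩ := hf c
  refine ⟨ν * c + μ * (d * wdzbar (fun w => conj (f w)) 0 - conj d * wdzbar f 0), fun x => ?_⟩
  rw [Sfun, Sfun, hd, hf.wdzbar_eq (x + c), hf.wdzbar_eq x, hf.conj.wdzbar_eq (x + c),
    hf.conj.wdzbar_eq x, map_add]
  ring

end ConstIncrements

lemma IsGHom.fst_apply_translation {ρ : G1 → G1} (hρ : IsGHom ρ) (c : ℂ) :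
    (ρ (1, c)).1 = 1 := by
  set χ : ℂ → Circle := fun c => (ρ (1, c)).1
  have hadd : ∀ c c', χ (c + c') = χ c' * χ c := fun c c' => by
    simpa [Gmul, add_comm] using congrArg Prod.fst (hρ (1, c') (1, c))
  have hneg : ∀ c, χ (-c) = χ c := fun c => by
    have hconj : Gmul (-1, 0) (1, c) = Gmul (1, -c) (-1, 0) := by simp [Gmul]
    have h := congrArg Prod.fst (congrArg ρ hconj)
    rw [hρ, hρ] at h
    exact mul_right_cancel (h.symm.trans (mul_comm _ _))
  calc χ c = χ (c / 2) * χ (c / 2) := by rw [← hadd, add_halves]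
    _ = χ (-(c / 2)) * χ (c / 2) := by rw [hneg]
    _ = χ 0 := by rw [← hadd, add_neg_cancel]
    _ = 1 := by simpa using hadd 0 0

lemma Equivariant.hasConstIncrements {ρ : G1 → G1} {τ : ℂ → ℂ} (h : Equivariant ρ τ) :
    HasConstIncrements τ := fun c =>
  ⟨(ρ (1, c)).2, fun x => by simpa [Gact, h.1.fst_apply_translation c] using h.2 (1, c) x⟩

def covD (S f : ℂ → ℂ) : ℂ → ℂ := fun w => 2 * wdz f w - conj (S w) * f w

def covDbar (S f : ℂ → ℂ) : ℂ → ℂ := fun w => 2 * wdzbar f w + S w * f w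

def twist (ℓ : ℂ → ℂ) (a b : ℂ) (f : ℂ → ℂ) : ℂ → ℂ :=
  fun w => exp (ℓ w) * f (a * w + b)

lemma deltaTau_eq_covD_covDbar {ν μ : ℝ} {τ F : ℂ → ℂ} {w : ℂ}
    (hS : DifferentiableAt ℝ (Sfun ν μ τ) w) (hF : DifferentiableAt ℝ F w)
    (hF' : DifferentiableAt ℝ (wdzbar F) w) :
    DeltaTau ν μ τ F w = covD (Sfun ν μ τ) (covDbar (Sfun ν μ τ) F) w
      + (μ * (τ w * lap (fun x => conj (τ x)) w - conj (τ w) * lap τ w)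
        - 2 * wdz (Sfun ν μ τ) w) * F w := by
  unfold covD covDbar
  rw [wdz_add (hF'.const_mul 2) (hS.fun_mul hF), wdz_const_mul hF', wdz_mul hS hF,
    DeltaTau, lap, ← mul_conj']
  ring

lemma Equivariant.deltaTau_eq {ρ : G1 → G1} {τ F : ℂ → ℂ} (hequiv : Equivariant ρ τ)
    (hτ : ContDiff ℝ 2 τ) (hF : ContDiff ℝ 2 F) (ν μ : ℝ) (w : ℂ) :
    DeltaTau ν μ τ F w
      = covD (Sfun ν μ τ) (covDbar (Sfun ν μ τ) F) w - 2 * wdz (Sfun ν μ τ) 0 * F w := by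
  have hinc := hequiv.hasConstIncrements
  rw [deltaTau_eq_covD_covDbar ((contDiff_Sfun (n := 1) ν μ hτ).differentiable one_ne_zero w)
      (hF.differentiable two_ne_zero w)
      ((contDiff_wdzbar (n := 1) hF).differentiable one_ne_zero w),
    hinc.lap_eq_zero, hinc.conj.lap_eq_zero, (hinc.sfun ν μ).wdz_eq]
  ring

section Twist

variable {S ℓ F : ℂ → ℂ} {a b w : ℂ}

lemma covD_const_mul (hF : DifferentiableAt ℝ F w) (c : ℂ) :
    covD S (fun x => c * F x) w = c * covD S F w := by
  rw [covD, covD, wdz_const_mul hF]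
  ring

lemma differentiable_twist (hℓ : Differentiable ℝ ℓ) (hF : Differentiable ℝ F) :
    Differentiable ℝ (twist ℓ a b F) := by
  unfold twist
  fun_prop

lemma covD_twist (hℓ : DifferentiableAt ℝ ℓ w) (hF : DifferentiableAt ℝ F (a * w + b))
    (hgauge : 2 * wdz ℓ w - conj (S w) = -(a * conj (S (a * w + b)))) :
    covD S (twist ℓ a b F) w = a * twist ℓ a b (covD S F) w := by
  unfold covD twist
  rw [wdz_mul hℓ.cexp (hasFDerivAt_comp_mul_add hF).differentiableAt, wdz_cexp hℓ,
    wdz_comp_mul_add hF]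
  linear_combination (exp (ℓ w) * F (a * w + b)) * hgauge

lemma covDbar_twist (hℓ : DifferentiableAt ℝ ℓ w) (hF : DifferentiableAt ℝ F (a * w + b))
    (hgauge : 2 * wdzbar ℓ w + S w = conj a * S (a * w + b)) :
    covDbar S (twist ℓ a b F) w = conj a * twist ℓ a b (covDbar S F) w := by
  unfold covDbar twist
  rw [wdzbar_mul hℓ.cexp (hasFDerivAt_comp_mul_add hF).differentiableAt, wdzbar_cexp hℓ,
    wdzbar_comp_mul_add hF]
  linear_combination (exp (ℓ w) * F (a * w + b)) * hgauge

lemma covD_covDbar_twist (ha : conj a * a = 1) (hS : Differentiable ℝ S)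
    (hℓ : Differentiable ℝ ℓ) (hF : ContDiff ℝ 2 F)
    (hgauge : ∀ x, 2 * wdz ℓ x - conj (S x) = -(a * conj (S (a * x + b))))
    (hgauge' : ∀ x, 2 * wdzbar ℓ x + S x = conj a * S (a * x + b)) (w : ℂ) :
    covD S (covDbar S (twist ℓ a b F)) w = twist ℓ a b (covD S (covDbar S F)) w := by
  have hF₁ : Differentiable ℝ F := hF.differentiable two_ne_zero
  have hwF : Differentiable ℝ (wdzbar F) :=
    (contDiff_wdzbar (n := 1) hF).differentiable one_ne_zero
  have hG : Differentiable ℝ (covDbar S F) := by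
    unfold covDbar
    fun_prop
  have hbar : covDbar S (twist ℓ a b F) = fun x => conj a * twist ℓ a b (covDbar S F) x :=
    funext fun x => covDbar_twist (hℓ x) (hF₁ _) (hgauge' x)
  rw [hbar, covD_const_mul (differentiable_twist hℓ hG w), covD_twist (hℓ w) (hG _) (hgauge w),
    ← mul_assoc, ha, one_mul]

end Twist

lemma Circle.conj_coe_mul_self (u : Circle) : conj (u : ℂ) * u = 1 := by
  rw [← Circle.coe_inv_eq_conj, ← Circle.coe_mul, inv_mul_cancel, Circle.coe_one]

lemma conj_Gact_Ginv_zero (g : G1) : conj (Gact (Ginv g) 0) = -(g.1 * conj g.2) := by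
  simp only [Gact, Ginv, mul_zero, zero_add, map_neg, map_mul, neg_mul,
    Circle.coe_inv_eq_conj, conj_conj]

def multiplierExponent (ν μ : ℝ) (τ : ℂ → ℂ) (ρ : G1 → G1) (g : G1) (x : ℂ) : ℂ :=
  ν / 2 * conj (Gact (Ginv g) 0) * x + μ / 2 * conj (Gact (Ginv (ρ g)) 0) * τ x

def multiplierPhase (ν μ : ℝ) (τ : ℂ → ℂ) (ρ : G1 → G1) (g : G1) (x : ℂ) : ℂ :=
  multiplierExponent ν μ τ ρ g x - conj (multiplierExponent ν μ τ ρ g x)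

lemma conj_jfac_mul_jfac (ν μ : ℝ) (τ : ℂ → ℂ) (ρ : G1 → G1) (g : G1) (x : ℂ) :
    conj (jfac ν g x * jfac μ (ρ g) (τ x)) = exp (multiplierPhase ν μ τ ρ g x) := by
  have key : ∀ (α : ℝ) (k y : ℂ),
      conj (-I * α * ((y * k).im : ℂ)) = α / 2 * k * y - conj (α / 2 * k * y) := by
    intro α k y
    have h := sub_conj (y * k)
    push_cast at h
    simp only [map_mul, map_neg, conj_I, conj_ofReal, map_div₀, map_ofNat] at h ⊢
    linear_combination (-α / 2 : ℂ) * h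
  rw [map_mul, jfac, jfac, ← exp_conj, ← exp_conj, ← exp_add, key, key, multiplierPhase,
    multiplierExponent, map_add]
  congr 1
  ring

section Gauge

variable {ρ : G1 → G1} {τ : ℂ → ℂ}

lemma differentiable_multiplierExponent (hτ : Differentiable ℝ τ) (ν μ : ℝ) (g : G1) :
    Differentiable ℝ (multiplierExponent ν μ τ ρ g) := by
  unfold multiplierExponent
  fun_prop

lemma wdz_multiplierExponent (hτ : Differentiable ℝ τ) (ν μ : ℝ) (g : G1) (w : ℂ) :
    wdz (multiplierExponent ν μ τ ρ g) w =
      ν / 2 * conj (Gact (Ginv g) 0) + μ / 2 * conj (Gact (Ginv (ρ g)) 0) * wdz τ w := by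
  unfold multiplierExponent
  rw [wdz_add (by fun_prop) (by fun_prop), wdz_const_mul (f := fun x => x) differentiableAt_id,
    wdz_id, wdz_const_mul (hτ w), mul_one]

lemma wdzbar_multiplierExponent (hτ : Differentiable ℝ τ) (ν μ : ℝ) (g : G1) (w : ℂ) :
    wdzbar (multiplierExponent ν μ τ ρ g) w =
      μ / 2 * conj (Gact (Ginv (ρ g)) 0) * wdzbar τ w := by
  unfold multiplierExponent
  rw [wdzbar_add (by fun_prop) (by fun_prop),
    wdzbar_const_mul (f := fun x => x) differentiableAt_id, wdzbar_id,
    wdzbar_const_mul (hτ w), mul_zero, zero_add]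

lemma Equivariant.two_mul_wdzbar_multiplierPhase_add_sfun (hequiv : Equivariant ρ τ)
    (hτ : Differentiable ℝ τ) (ν μ : ℝ) (g : G1) (w : ℂ) :
    2 * wdzbar (multiplierPhase ν μ τ ρ g) w + Sfun ν μ τ w
      = conj (g.1 : ℂ) * Sfun ν μ τ (g.1 * w + g.2) := by
  have hinc := hequiv.hasConstIncrements
  have hτg : ∀ x, τ (g.1 * x + g.2) = (ρ g).1 * τ x + (ρ g).2 := hequiv.2 g
  have hτg' : ∀ x, conj (τ (g.1 * x + g.2)) = conj ((ρ g).1 : ℂ) * conj (τ x) + conj (ρ g).2 :=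
    fun x => by rw [hτg, map_add, map_mul]
  have hP := conj_mul_wdzbar_of_comp_mul_add (z := w) (fun x => (hτ x).conj) hτg'
  have hQ := conj_mul_wdzbar_of_comp_mul_add (z := w) hτ hτg
  have haa := Circle.conj_coe_mul_self g.1
  have hAA := Circle.conj_coe_mul_self (ρ g).1
  unfold multiplierPhase
  rw [wdzbar_sub_conj (differentiable_multiplierExponent hτ ν μ g w),
    wdzbar_multiplierExponent hτ, wdz_multiplierExponent hτ, Sfun, Sfun, hτg,
    conj_Gact_Ginv_zero, conj_Gact_Ginv_zero]
  simp only [map_add, map_mul, map_neg, map_div₀, map_ofNat, conj_ofReal, conj_conj]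
  rw [← wdzbar_conj]
  rw [hinc.wdzbar_eq (_ + _), ← hinc.wdzbar_eq w] at hQ ⊢
  rw [hinc.conj.wdzbar_eq (_ + _), ← hinc.conj.wdzbar_eq w] at hP ⊢
  linear_combination (-(ν : ℂ) * w) * haa - μ * ((ρ g).1 * τ w + (ρ g).2) * hP
    + μ * (conj ((ρ g).1 : ℂ) * conj (τ w) + conj (ρ g).2) * hQ
    + μ * (conj (τ w) * wdzbar τ w - τ w * wdzbar (fun x => conj (τ x)) w) * hAA

lemma Equivariant.two_mul_wdz_multiplierPhase_sub_conj_sfun (hequiv : Equivariant ρ τ)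
    (hτ : Differentiable ℝ τ) (ν μ : ℝ) (g : G1) (w : ℂ) :
    2 * wdz (multiplierPhase ν μ τ ρ g) w - conj (Sfun ν μ τ w)
      = -(g.1 * conj (Sfun ν μ τ (g.1 * w + g.2))) := by
  have h := congrArg conj (hequiv.two_mul_wdzbar_multiplierPhase_add_sfun hτ ν μ g w)
  have hE := differentiable_multiplierExponent (ρ := ρ) hτ ν μ g w
  unfold multiplierPhase at h ⊢
  rw [wdzbar_sub_conj hE] at h
  rw [wdz_sub_conj hE]
  simp only [map_add, map_mul, map_sub, map_ofNat, conj_conj] at h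
  linear_combination -h

end Gauge

/-- the mixed Schrödinger operator `Δ^{ν,μ}_τ` commutes with the
projective representation `(T_g f)(z) = conj(J(g,z)) f(g·z)`, where
`J(g,z) = j^ν(g,z) j^μ(ρ(g),τ(z))`. -/
theorem deltaTau_invariant (ρ : G1 → G1) (τ : ℂ → ℂ) (hequiv : Equivariant ρ τ)
    (hτ : ContDiff ℝ (⊤ : ℕ∞) τ) (ν μ : ℝ) (g : G1)
    (f : ℂ → ℂ) (hf : ContDiff ℝ (⊤ : ℕ∞) f) (z : ℂ) :
    DeltaTau ν μ τ
        (fun w => conj (jfac ν g w * jfac μ (ρ g) (τ w)) * f (Gact g w)) z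
      = conj (jfac ν g z * jfac μ (ρ g) (τ z)) * DeltaTau ν μ τ f (Gact g z) := by
  have hτ₂ : ContDiff ℝ 2 τ := hτ.of_le (WithTop.coe_le_coe.mpr le_top)
  have hf₂ : ContDiff ℝ 2 f := hf.of_le (WithTop.coe_le_coe.mpr le_top)
  have hτ₁ : Differentiable ℝ τ := hτ₂.differentiable two_ne_zero
  have hℓ : ContDiff ℝ 2 (multiplierPhase ν μ τ ρ g) := by
    unfold multiplierPhase multiplierExponent
    fun_prop
  have hTf : ContDiff ℝ 2 (twist (multiplierPhase ν μ τ ρ g) g.1 g.2 f) := by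
    unfold twist
    fun_prop
  simp only [conj_jfac_mul_jfac]
  change DeltaTau ν μ τ (twist (multiplierPhase ν μ τ ρ g) g.1 g.2 f) z = _
  rw [hequiv.deltaTau_eq hτ₂ hTf, hequiv.deltaTau_eq hτ₂ hf₂,
    covD_covDbar_twist (Circle.conj_coe_mul_self g.1)
      ((contDiff_Sfun (n := 1) ν μ hτ₂).differentiable one_ne_zero)
      (hℓ.differentiable two_ne_zero) hf₂
      (hequiv.two_mul_wdz_multiplierPhase_sub_conj_sfun hτ₁ ν μ g)
      (hequiv.two_mul_wdzbar_multiplierPhase_add_sfun hτ₁ ν μ g)]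
  simp only [twist, Gact]
  ring
end
end

section
/- Let (ρ,τ) be an equivariant pair with τ ℝ-differentiable, and let ν, μ ∈ ℝ. Then the function B(z) := ν + μ(|∂τ/∂z(z)|² − |∂τ/∂z̄(z)|²) is constant on ℂ, i.e. B(z) = B(0) for all z ∈ ℂ. -/
open Complex MeasureTheory ComplexConjugate

noncomputable section

/- Translating by `b` gives `τ (z + b) = c τ(z) + d` with `[c, d] = ρ [1, b]`, so the real derivative of `τ`
at `b` is the derivative at `0` multiplied by the unimodular constant `c`. Both Wirtinger derivatives
therefore get multiplied by `c`, and their absolute values, hence `B`, do not change. -/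

theorem Equivariant.comp_add {ρ : G1 → G1} {τ : ℂ → ℂ} (hequiv : Equivariant ρ τ) (b z : ℂ) :
    τ (z + b) = ((ρ (1, b)).1 : ℂ) * τ z + (ρ (1, b)).2 := by
  simpa [Gact] using hequiv.2 (1, b) z

theorem fderiv_add_eq_smul_of_comp_add {E F : Type*} [NormedAddCommGroup E] [NormedSpace ℝ E]
    [NormedAddCommGroup F] [NormedSpace ℂ F] {f : E → F} {x b : E} (hf : DifferentiableAt ℝ f x)
    {c : ℂ} {d : F} (h : ∀ z, f (z + b) = c • f z + d) :
    fderiv ℝ f (x + b) = c • fderiv ℝ f x := by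
  rw [← fderiv_comp_add_right, funext h]
  exact ((hf.hasFDerivAt.const_smul c).add_const d).fderiv

theorem wdz_eq_mul_of_fderiv_eq_smul {f : ℂ → ℂ} {a b c : ℂ}
    (h : fderiv ℝ f b = c • fderiv ℝ f a) : wdz f b = c * wdz f a := by
  simp only [wdz, h, smul_apply, smul_eq_mul]
  ring

theorem wdzbar_eq_mul_of_fderiv_eq_smul {f : ℂ → ℂ} {a b c : ℂ}
    (h : fderiv ℝ f b = c • fderiv ℝ f a) : wdzbar f b = c * wdzbar f a := by
  simp only [wdzbar, h, smul_apply, smul_eq_mul]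
  ring

theorem Bfield_eq_of_fderiv_eq_smul {τ : ℂ → ℂ} {a b c : ℂ} (hc : ‖c‖ = 1)
    (h : fderiv ℝ τ b = c • fderiv ℝ τ a) (ν μ : ℝ) : Bfield ν μ τ b = Bfield ν μ τ a := by
  simp only [Bfield, wdz_eq_mul_of_fderiv_eq_smul h, wdzbar_eq_mul_of_fderiv_eq_smul h, norm_mul,
    hc, one_mul]

/-- for an equivariant pair `(ρ,τ)`, the magnetic field
`B(z) = ν + μ(|∂τ/∂z(z)|² − |∂τ/∂z̄(z)|²)` is constant on `ℂ`. -/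
theorem bfield_constant (ρ : G1 → G1) (τ : ℂ → ℂ) (hequiv : Equivariant ρ τ)
    (hτ : Differentiable ℝ τ) (ν μ : ℝ) :
    ∀ z : ℂ, Bfield ν μ τ z = Bfield ν μ τ 0 := by
  intro b
  have hderiv : fderiv ℝ τ b = ((ρ (1, b)).1 : ℂ) • fderiv ℝ τ 0 := by
    simpa using fderiv_add_eq_smul_of_comp_add (hτ 0) (hequiv.comp_add b)
  exact Bfield_eq_of_fderiv_eq_smul (Circle.norm_coe _) hderiv ν μ
end
end

section
/- Let Γ be a subgroup of G with ρ(Γ) ⊆ Γ, χ : Γ → U(1), (ρ,τ) an equivariant pair with τ C^∞, ν, μ ∈ ℝ, B := ν + μ(|∂τ/∂z(0)|² − |∂τ/∂z̄(0)|²), and let φ : ℂ → ℝ be a C^∞ gauge (i.e. i·Dφ(z)(v) = −(1/2)(conj(S(z))·v − S(z)·conj(v)) + (B/2)(conj(z)·v − z·conj(v)) for all z, v). Define χ_τ(γ) := χ(γ)·exp(i(φ(γ·0) − φ(0)))·j^{ν−B}(γ,0)·j^{μ}(ρ(γ),τ(0)). Then a C^∞ function F : ℂ → ℂ satisfies F(γ·z)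 = χ(γ)·j^ν(γ,z)·j^μ(ρ(γ),τ(z))·F(z) for all γ ∈ Γ, z ∈ ℂ, if and only if the function G_F(z) := exp(iφ(z))·F(z) satisfies G_F(γ·z) = χ_τ(γ)·j^{B}(γ,z)·G_F(z) for all γ ∈ Γ, z ∈ ℂ. -/
open Complex MeasureTheory ComplexConjugate

noncomputable section

/-- The pseudo-character
`χ_τ(γ) = χ(γ) exp(i(φ(γ·0) − φ(0))) j^{ν−B}(γ,0) j^μ(ρ(γ),τ(0))`. -/
def chiTau (ν μ B : ℝ) (ρ : G1 → G1) (τ : ℂ → ℂ) (φ : ℂ → ℝ) (χ : G1 → Circle)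
    (γ : G1) : ℂ :=
  (χ γ : ℂ) * Complex.exp (Complex.I * ((φ (Gact γ 0) - φ 0 : ℝ) : ℂ)) *
    jfac (ν - B) γ 0 * jfac μ (ρ γ) (τ 0)

/-! The gauge condition says that `dφ` is the difference of the connection forms of the mixed
problem and of the Landau problem. Equivariance of `τ` makes `S` transform affinely under
`z ↦ γ·z`, so that `φ(γ·z) - φ(z)` differs from the phases `(ν - B) Im(z conj(γ⁻¹·0))` and
`μ Im(τ(z) conj(ρ(γ)⁻¹·0))` of the automorphy factors by a function with vanishing derivative,
i.e. by its value at `z = 0`. Exponentiating gives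
`e^{iφ(γ·z)} χ(γ) j^ν(γ,z) j^μ(ρ(γ),τ(z)) = χ_τ(γ) j^B(γ,z) e^{iφ(z)}`, which makes the two
automorphy conditions equivalent. -/

theorem ofReal_im_eq_conj_sub_mul_I (x : ℂ) : (x.im : ℂ) = (conj x - x) * I / 2 := by
  rw [← neg_sub, sub_conj]
  push_cast
  linear_combination (x.im : ℂ) * I_sq

theorem Circle.coe_mul_conj (z : Circle) : (z : ℂ) * conj (z : ℂ) = 1 := by
  simp [mul_conj]

theorem Gact_Ginv_zero (g : G1) : Gact (Ginv g) 0 = -conj (g.1 : ℂ) * g.2 := by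
  simp only [Gact, Ginv, Circle.coe_inv_eq_conj, mul_zero, zero_add]

section Wirtinger

variable {f : ℂ → ℂ} {z : ℂ}

theorem fderiv_apply_eq_wdz_mul_add_wdzbar_mul (f : ℂ → ℂ) (z u : ℂ) :
    fderiv ℝ f z u = wdz f z * u + wdzbar f z * conj u := by
  have hu : u = u.re • (1 : ℂ) + u.im • I := by simp [Complex.real_smul, Complex.re_add_im]
  rw [hu, map_add, map_smul, map_smul, wdz, wdzbar]
  simp only [Complex.real_smul, map_add, map_mul, conj_ofReal, map_one, conj_I]
  linear_combination (u.im : ℂ) * fderiv ℝ f z I * I_sq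

theorem HasFDerivAt.wdz_eq_and_wdzbar_eq {L : ℂ →L[ℝ] ℂ} {p q : ℂ} (hf : HasFDerivAt f L z)
    (hL : ∀ u, L u = p * u + q * conj u) : wdz f z = p ∧ wdzbar f z = q := by
  simp only [wdz, wdzbar, hf.fderiv, hL, map_one, conj_I]
  constructor
  · linear_combination (1 / 2 : ℂ) * (q - p) * I_sq
  · linear_combination (1 / 2 : ℂ) * (p - q) * I_sq

theorem wdzbar_conj_comp (hf : DifferentiableAt ℝ f z) :
    wdzbar (fun w => conj (f w)) z = conj (wdz f z) := by
  refine ((conjCLE.toContinuousLinearMap.hasFDerivAt.comp z hf.hasFDerivAt).wdz_eq_and_wdzbar_eq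
    (p := conj (wdzbar f z)) fun u => ?_).2
  change conj (fderiv ℝ f z u) = _
  rw [fderiv_apply_eq_wdz_mul_add_wdzbar_mul, map_add, map_mul, map_mul, conj_conj]
  ring

theorem wdz_wdzbar_of_equivariant (hf : Differentiable ℝ f) {a b a' b' : ℂ}
    (ha : a * conj a = 1) (heq : ∀ w, f (a * w + b) = a' * f w + b') (z : ℂ) :
    wdz f (a * z + b) = a' * conj a * wdz f z ∧ wdzbar f (a * z + b) = a' * a * wdzbar f z := by
  have hcomp : HasFDerivAt (fun w => f (a * w + b))
      ((fderiv ℝ f (a * z + b)).comp (a • (1 : ℂ →L[ℝ] ℂ))) z :=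
    (hf _).hasFDerivAt.comp z (((hasFDerivAt_id z).const_mul a).add_const b)
  have hcomp' : HasFDerivAt (fun w => f (a * w + b)) (a' • fderiv ℝ f z) z := by
    simpa only [heq] using ((hf z).hasFDerivAt.const_mul a').add_const b'
  obtain ⟨hp, hq⟩ := hcomp.wdz_eq_and_wdzbar_eq
    (p := wdz f (a * z + b) * a) (q := wdzbar f (a * z + b) * conj a) fun u => by
      simp only [ContinuousLinearMap.comp_apply, smul_apply, one_apply_eq_self, smul_eq_mul,
        fderiv_apply_eq_wdz_mul_add_wdzbar_mul f (a * z + b), map_mul]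
      ring
  obtain ⟨hp', hq'⟩ := hcomp'.wdz_eq_and_wdzbar_eq
    (p := a' * wdz f z) (q := a' * wdzbar f z) fun u => by
      simp only [smul_apply, fderiv_apply_eq_wdz_mul_add_wdzbar_mul f z, smul_eq_mul]
      ring
  constructor
  · linear_combination conj a * (hp.symm.trans hp') - wdz f (a * z + b) * ha
  · linear_combination a * (hq.symm.trans hq') - wdzbar f (a * z + b) * ha

end Wirtinger

section Gauge

variable {ν μ B : ℝ} {τ : ℂ → ℂ} {φ : ℂ → ℝ}

theorem Sfun_eq (hτ : Differentiable ℝ τ) (z : ℂ) :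
    Sfun ν μ τ z = ν * z + μ * (τ z * conj (wdz τ z) - conj (τ z) * wdzbar τ z) := by
  rw [Sfun, wdzbar_conj_comp (hτ z)]

theorem Sfun_mul_add (hτ : Differentiable ℝ τ) {a b a' b' : ℂ} (ha : a * conj a = 1)
    (ha' : a' * conj a' = 1) (heq : ∀ w, τ (a * w + b) = a' * τ w + b') (z : ℂ) :
    Sfun ν μ τ (a * z + b) = a * Sfun ν μ τ z + ν * b
      + μ * a * (b' * conj a' * conj (wdz τ z) - conj b' * a' * wdzbar τ z) := by
  obtain ⟨hwdz, hwdzbar⟩ := wdz_wdzbar_of_equivariant hτ ha heq z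
  rw [Sfun_eq hτ, Sfun_eq hτ, hwdz, hwdzbar, heq]
  simp only [map_mul, map_add, conj_conj]
  linear_combination (μ * a * τ z * conj (wdz τ z) - μ * a * conj (τ z) * wdzbar τ z) * ha'

theorem IsGauge.fderiv_apply (hφ : IsGauge ν μ B τ φ) (z v : ℂ) :
    fderiv ℝ φ z v = (conj (B * z - Sfun ν μ τ z) * v).im := by
  apply ofReal_injective
  apply mul_left_cancel₀ I_ne_zero
  have h := sub_conj (conj (B * z - Sfun ν μ τ z) * v)
  rw [hφ.2]
  simp only [map_mul, map_sub, conj_conj, conj_ofReal] at h ⊢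
  push_cast at h
  linear_combination (1 / 2 : ℂ) * h

theorem IsGauge.hasFDerivAt_phase (hτ : Differentiable ℝ τ) (hφ : IsGauge ν μ B τ φ)
    {γ γ' : G1} (hγ : ∀ w, τ (Gact γ w) = Gact γ' (τ w)) (w : ℂ) :
    HasFDerivAt (fun z => φ (Gact γ z) - φ z - (ν - B) * (z * conj (Gact (Ginv γ) 0)).im
      - μ * (τ z * conj (Gact (Ginv γ') 0)).im) (0 : ℂ →L[ℝ] ℝ) w := by
  have hφd : Differentiable ℝ φ := hφ.1.differentiable (by simp)
  have hact := (hφd (Gact γ w)).hasFDerivAt.comp w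
    (((hasFDerivAt_id w).const_mul (γ.1 : ℂ)).add_const γ.2)
  have hlin := imCLM.hasFDerivAt.comp w ((hasFDerivAt_id w).mul_const (conj (Gact (Ginv γ) 0)))
  have hτlin := imCLM.hasFDerivAt.comp w ((hτ w).hasFDerivAt.mul_const (conj (Gact (Ginv γ') 0)))
  refine (((hact.sub (hφd w).hasFDerivAt).sub (hlin.const_mul (ν - B))).sub
    (hτlin.const_mul μ)).congr_fderiv ?_
  ext v
  simp only [sub_apply, ContinuousLinearMap.comp_apply, smul_apply, smul_eq_mul, imCLM_apply,
    zero_apply, ContinuousLinearMap.id_apply, hφ.fderiv_apply,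
    fderiv_apply_eq_wdz_mul_add_wdzbar_mul, Gact_Ginv_zero]
  have hS := Sfun_mul_add (ν := ν) (μ := μ) hτ (Circle.coe_mul_conj γ.1)
    (Circle.coe_mul_conj γ'.1) hγ w
  rw [show Gact γ w = γ.1 * w + γ.2 from rfl, hS]
  apply ofReal_injective
  push_cast
  simp only [ofReal_im_eq_conj_sub_mul_I, map_mul, map_sub, map_add, map_neg, conj_conj,
    conj_ofReal]
  set a' : ℂ := (γ'.1 : ℂ)
  set b' := γ'.2
  set S := Sfun ν μ τ w
  -- a polynomial identity in the variables and their conjugates, once `γ.1 * conj γ.1 = 1`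
  linear_combination I / 2 * (B * (w * conj v - conj w * v) + (conj S * v - S * conj v)
    + μ * (conj b' * a' * (wdz τ w * v + wdzbar τ w * conj v)
      - b' * conj a' * (conj (wdz τ w) * conj v + conj (wdzbar τ w) * v)))
    * Circle.coe_mul_conj γ.1

theorem IsGauge.phase_eq (hτ : Differentiable ℝ τ) (hφ : IsGauge ν μ B τ φ) {γ γ' : G1}
    (hγ : ∀ w, τ (Gact γ w) = Gact γ' (τ w)) (z : ℂ) :
    φ (Gact γ z) - φ z - (ν - B) * (z * conj (Gact (Ginv γ) 0)).im
      - μ * (τ z * conj (Gact (Ginv γ') 0)).im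
      = φ (Gact γ 0) - φ 0 - μ * (τ 0 * conj (Gact (Ginv γ') 0)).im := by
  have hphase := hφ.hasFDerivAt_phase hτ hγ
  have h := is_const_of_fderiv_eq_zero (fun w => (hphase w).differentiableAt)
    (fun w => (hphase w).fderiv) z 0
  simpa only [zero_mul, zero_im, mul_zero, sub_zero] using h

theorem IsGauge.exp_mul_factor_eq (hτ : Differentiable ℝ τ) (hφ : IsGauge ν μ B τ φ)
    {ρ : G1 → G1} {γ : G1} (hγ : ∀ w, τ (Gact γ w) = Gact (ρ γ) (τ w)) (χ : G1 → Circle)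
    (z : ℂ) :
    exp (I * φ (Gact γ z)) * (χ γ * jfac ν γ z * jfac μ (ρ γ) (τ z))
      = chiTau ν μ B ρ τ φ χ γ * jfac B γ z * exp (I * φ z) := by
  have hphase := hφ.phase_eq hτ hγ z
  set m₁ := (z * conj (Gact (Ginv γ) 0)).im
  set m₂ := (τ z * conj (Gact (Ginv (ρ γ)) 0)).im
  set m₀ := (τ 0 * conj (Gact (Ginv (ρ γ)) 0)).im
  have hexp : exp (I * φ (Gact γ z)) * exp (-I * ν * m₁) * exp (-I * μ * m₂)
      = exp (I * (φ (Gact γ 0) - φ 0 : ℝ)) * exp (-I * μ * m₀) * exp (-I * B * m₁)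
        * exp (I * φ z) := by
    simp only [← exp_add]
    congr 1
    have hphaseC := congrArg ((↑) : ℝ → ℂ) hphase
    push_cast at hphaseC ⊢
    linear_combination I * hphaseC
  simp only [chiTau, jfac, zero_mul, zero_im, ofReal_zero, mul_zero, exp_zero, mul_one]
  linear_combination (χ γ : ℂ) * hexp

end Gauge

theorem lifting_theorem_general
    (Γ : Set G1)
    (ρ : G1 → G1) (τ : ℂ → ℂ) (hequiv : Equivariant ρ τ)
    (hτ : ContDiff ℝ (⊤ : ℕ∞) τ) (χ : G1 → Circle) (ν μ : ℝ)
    (φ : ℂ → ℝ) (hφ : IsGauge ν μ (Bfield ν μ τ 0) τ φ)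
    (F : ℂ → ℂ) :
    (∀ γ ∈ Γ, ∀ z : ℂ,
        F (Gact γ z) = (χ γ : ℂ) * jfac ν γ z * jfac μ (ρ γ) (τ z) * F z) ↔
      (∀ γ ∈ Γ, ∀ z : ℂ,
        Complex.exp (Complex.I * ((φ (Gact γ z) : ℝ) : ℂ)) * F (Gact γ z) =
          chiTau ν μ (Bfield ν μ τ 0) ρ τ φ χ γ * jfac (Bfield ν μ τ 0) γ z *
            (Complex.exp (Complex.I * ((φ z : ℝ) : ℂ)) * F z)) := by
  have hτd : Differentiable ℝ τ := hτ.differentiable (by simp)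
  have hfactor γ z := hφ.exp_mul_factor_eq hτd (hequiv.2 γ) χ z
  constructor
  · intro h γ hγ z
    rw [h γ hγ z]
    linear_combination F z * hfactor γ z
  · intro h γ hγ z
    apply mul_left_cancel₀ (exp_ne_zero (I * φ (Gact γ z)))
    linear_combination h γ hγ z - F z * hfactor γ z

/-- lifting theorem: `F` is a `(Γ,χ)`-mixed automorphic function iff
`G_F = e^{iφ} F` is a classical `(Γ,χ_τ)`-automorphic function of weight `B`. -/
theorem lifting_theorem
    (Γ : Set G1) (hone : ((1 : Circle), (0 : ℂ)) ∈ Γ)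
    (hmul : ∀ g ∈ Γ, ∀ h ∈ Γ, Gmul g h ∈ Γ) (hinv : ∀ g ∈ Γ, Ginv g ∈ Γ)
    (ρ : G1 → G1) (τ : ℂ → ℂ) (hequiv : Equivariant ρ τ)
    (hρΓ : ∀ γ ∈ Γ, ρ γ ∈ Γ)
    (hτ : ContDiff ℝ (⊤ : ℕ∞) τ) (χ : G1 → Circle) (ν μ : ℝ)
    (φ : ℂ → ℝ) (hφ : IsGauge ν μ (Bfield ν μ τ 0) τ φ)
    (F : ℂ → ℂ) (hF : ContDiff ℝ (⊤ : ℕ∞) F) :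
    (∀ γ ∈ Γ, ∀ z : ℂ,
        F (Gact γ z) = (χ γ : ℂ) * jfac ν γ z * jfac μ (ρ γ) (τ z) * F z) ↔
      (∀ γ ∈ Γ, ∀ z : ℂ,
        Complex.exp (Complex.I * ((φ (Gact γ z) : ℝ) : ℂ)) * F (Gact γ z) =
          chiTau ν μ (Bfield ν μ τ 0) ρ τ φ χ γ * jfac (Bfield ν μ τ 0) γ z *
            (Complex.exp (Complex.I * ((φ z : ℝ) : ℂ)) * F z)) :=
  lifting_theorem_general Γ ρ τ hequiv hτ χ ν μ φ hφ F
end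
end
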